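/- arXiv:1806.00391 — 4 statements merged into one kernel-verified Lean document; each statement's English description precedes it below -/
import Mathlib

section
/- Let G be an étale locally compact Hausdorff groupoid. Then G is ample, i.e. the compact open bisections form a basis for the topology of G, if and only if the unit space G^(0) is totally disconnected. -/
open MeasureTheory Topology Filter
open scoped ENNReal

universe u v

/-- A locally compact Hausdorff groupoid, modelled as a type `G` with a partially
defined multiplication (via the composability predicate `Comp`), an inversion,
and continuity of the structure maps. -/
structure TopGroupoid (G : Type u) [TopologicalSpace G] where
  mul : G → G → G
  inv : G → G
  Comp : G → G → Prop
  inv_inv : ∀ g, inv (inv g) = g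
  comp_inv : ∀ g, Comp g (inv g)
  comp_iff : ∀ g h, Comp g h ↔ mul (inv g) g = mul h (inv h)
  assoc : ∀ g₁ g₂ g₃, Comp g₁ g₂ → Comp g₂ g₃ →
    Comp (mul g₁ g₂) g₃ ∧ Comp g₁ (mul g₂ g₃) ∧
      mul (mul g₁ g₂) g₃ = mul g₁ (mul g₂ g₃)
  inv_mul_cancel_left : ∀ g h, Comp g h → mul (inv g) (mul g h) = h
  mul_inv_cancel_right : ∀ g h, Comp g h → mul (mul g h) (inv h) = g
  dmul : ∀ g h, Comp g h → mul (inv (mul g h)) (mul g h) = mul (inv h) h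
  rmul : ∀ g h, Comp g h → mul (mul g h) (inv (mul g h)) = mul g (inv g)
  continuous_inv : Continuous inv
  continuous_mul : Continuous fun p : {p : G × G // Comp p.1 p.2} => mul p.1.1 p.1.2

namespace TopGroupoid

variable {G : Type u} [TopologicalSpace G] (𝒢 : TopGroupoid G)

/-- The domain map `d(g) = g⁻¹ g`. -/
def d (g : G) : G := 𝒢.mul (𝒢.inv g) g

/-- The range map `r(g) = g g⁻¹`. -/
def r (g : G) : G := 𝒢.mul g (𝒢.inv g)

/-- The unit space `G⁽⁰⁾ = {g | g = g⁻¹ = g²}`. -/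
def units : Set G := {g | 𝒢.inv g = g ∧ 𝒢.mul g g = g}

theorem comp_iff' (g h : G) : 𝒢.Comp g h ↔ 𝒢.d g = 𝒢.r h := 𝒢.comp_iff g h

theorem d_inv (g : G) : 𝒢.d (𝒢.inv g) = 𝒢.r g := by
  simp only [d, r, 𝒢.inv_inv]

theorem r_inv (g : G) : 𝒢.r (𝒢.inv g) = 𝒢.d g := by
  simp only [d, r, 𝒢.inv_inv]

theorem d_mul {g h : G} (hc : 𝒢.Comp g h) : 𝒢.d (𝒢.mul g h) = 𝒢.d h := 𝒢.dmul g h hc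

theorem r_mul {g h : G} (hc : 𝒢.Comp g h) : 𝒢.r (𝒢.mul g h) = 𝒢.r g := 𝒢.rmul g h hc

theorem comp_inv_right {g h : G} (hd : 𝒢.d g = 𝒢.d h) : 𝒢.Comp g (𝒢.inv h) := by
  rw [𝒢.comp_iff', 𝒢.r_inv]; exact hd

theorem comp_inv_left {g h : G} (hr : 𝒢.r g = 𝒢.r h) : 𝒢.Comp (𝒢.inv g) h := by
  rw [𝒢.comp_iff', 𝒢.d_inv]; exact hr

/-- `G` is étale if the domain map is a local homeomorphism. -/
def Etale : Prop := IsLocalHomeomorph 𝒢.d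

/-- An open bisection: an open set on which both `d` and `r` restrict to
homeomorphisms onto open subsets. -/
def IsBisection (U : Set G) : Prop :=
  IsOpen U ∧ IsOpenEmbedding (U.restrict 𝒢.d) ∧ IsOpenEmbedding (U.restrict 𝒢.r)

/-- `G` is ample if the compact open bisections form a basis of the topology. -/
def Ample : Prop :=
  TopologicalSpace.IsTopologicalBasis {U : Set G | 𝒢.IsBisection U ∧ IsCompact U}

/-- A subgroupoid: a subset closed under inversion and (composable) products. -/
def IsSubgroupoid (H : Set G) : Prop :=
  (∀ g ∈ H, 𝒢.inv g ∈ H) ∧ ∀ g h, g ∈ H → h ∈ H → 𝒢.Comp g h → 𝒢.mul g h ∈ H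

end TopGroupoid

/-!
Compact open sets of a Hausdorff space are clopen, so an ample groupoid has a basis of clopen sets
and is totally separated; in particular its unit space is totally disconnected.

Conversely, an étale groupoid is covered by open sets `U` on which `d` and `r` are injective, and
then `d` maps `U` homeomorphically onto an open subset `d(U)` of the unit space. When the unit
space is totally disconnected, `d(U)` is a locally compact Hausdorff totally disconnected space, so
every point of it has a compact open neighbourhood `K`; then `U ∩ d⁻¹(K)` is a compact open
bisection, and these bisections form a basis.
-/

open Set TopologicalSpace Topology

theorem exists_isCompact_isOpen_subset_of_isTotallyDisconnected {X : Type*} [TopologicalSpace X]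
    [T2Space X] [LocallyCompactSpace X] {W : Set X} (hW : IsOpen W) (hTD : IsTotallyDisconnected W)
    {x : X} (hx : x ∈ W) : ∃ K, IsCompact K ∧ IsOpen K ∧ x ∈ K ∧ K ⊆ W := by
  have : LocallyCompactSpace W := hW.locallyCompactSpace
  have : TotallyDisconnectedSpace W := totallyDisconnectedSpace_subtype_iff.mpr hTD
  obtain ⟨C, hC, hxC⟩ := exists_compact_mem_nhds (⟨x, hx⟩ : W)
  obtain ⟨K, hKclopen, hxK, hKC⟩ := loc_compact_Haus_tot_disc_of_zero_dim.exists_subset_of_mem_open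
    (mem_interior_iff_mem_nhds.mpr hxC) isOpen_interior
  have hK : IsCompact K := hC.of_isClosed_subset hKclopen.isClosed (hKC.trans interior_subset)
  exact ⟨(↑) '' K, hK.image continuous_subtype_val, hW.isOpenMap_subtype_val K hKclopen.isOpen,
    ⟨_, hxK, rfl⟩, Subtype.coe_image_subset W K⟩

namespace TopGroupoid

variable {G : Type u} [TopologicalSpace G] (𝒢 : TopGroupoid G)

theorem inv_involutive : Function.Involutive 𝒢.inv := 𝒢.inv_inv

theorem comp_inv_self (g : G) : 𝒢.Comp (𝒢.inv g) g := by
  rw [𝒢.comp_iff, 𝒢.inv_inv]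

theorem d_d (g : G) : 𝒢.d (𝒢.d g) = 𝒢.d g := 𝒢.d_mul (𝒢.comp_inv_self g)

theorem r_d (g : G) : 𝒢.r (𝒢.d g) = 𝒢.d g := by
  simpa only [d, r, 𝒢.inv_inv] using 𝒢.r_mul (𝒢.comp_inv_self g)

theorem inv_d (g : G) : 𝒢.inv (𝒢.d g) = 𝒢.d g := by
  have h := 𝒢.mul_inv_cancel_right (𝒢.inv (𝒢.d g)) (𝒢.d g) (𝒢.comp_inv_self _)
  rw [← d, 𝒢.d_d] at h
  exact h.symm.trans (𝒢.r_d g)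

theorem d_mem_units (g : G) : 𝒢.d g ∈ 𝒢.units := by
  refine ⟨𝒢.inv_d g, ?_⟩
  simpa only [r, 𝒢.inv_d] using 𝒢.r_d g

theorem r_eq_d_comp_inv : 𝒢.r = 𝒢.d ∘ 𝒢.inv := by
  ext g
  simp only [r, d, Function.comp_apply, 𝒢.inv_inv]

theorem isOpenMap_inv : IsOpenMap 𝒢.inv := fun s hs => by
  rw [𝒢.inv_involutive.image_eq_preimage_symm]
  exact hs.preimage 𝒢.continuous_inv

variable {𝒢}

theorem IsBisection.mono {U V : Set G} (hU : 𝒢.IsBisection U) (hV : IsOpen V) (hVU : V ⊆ U) :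
    𝒢.IsBisection V := by
  have hincl : IsOpenEmbedding (inclusion hVU) :=
    .inclusion hVU (hV.preimage continuous_subtype_val)
  exact ⟨hV, hU.2.1.comp hincl, hU.2.2.comp hincl⟩

theorem IsBisection.isCompact_inter_preimage_d {U K : Set G} (hU : 𝒢.IsBisection U)
    (hK : IsCompact K) (hKU : K ⊆ 𝒢.d '' U) : IsCompact (U ∩ 𝒢.d ⁻¹' K) := by
  have hd : IsInducing (U.domRestrict 𝒢.d) := hU.2.1.isInducing
  have hpre : IsCompact (Subtype.val ⁻¹' (𝒢.d ⁻¹' K) : Set U) :=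
    hd.isCompact_preimage' hK (by rwa [range_domRestrict])
  simpa only [Subtype.image_preimage_coe] using hpre.image continuous_subtype_val

theorem continuous_r (hEt : 𝒢.Etale) : Continuous 𝒢.r :=
  𝒢.r_eq_d_comp_inv ▸ hEt.continuous.comp 𝒢.continuous_inv

theorem isOpenMap_r (hEt : 𝒢.Etale) : IsOpenMap 𝒢.r :=
  𝒢.r_eq_d_comp_inv ▸ hEt.isOpenMap.comp 𝒢.isOpenMap_inv

theorem isBisection_of_injOn (hEt : 𝒢.Etale) {U : Set G} (hU : IsOpen U) (hd : InjOn 𝒢.d U)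
    (hr : InjOn 𝒢.r U) : 𝒢.IsBisection U := by
  simp only [IsBisection, isOpenEmbedding_iff_continuous_injective_isOpenMap]
  exact ⟨hU,
    ⟨hEt.continuous.comp continuous_subtype_val, hd.injective, hEt.isOpenMap.domRestrict hU⟩,
    ⟨(continuous_r hEt).comp continuous_subtype_val, hr.injective,
      (isOpenMap_r hEt).domRestrict hU⟩⟩

theorem exists_isBisection_mem (hEt : 𝒢.Etale) (g : G) : ∃ U, 𝒢.IsBisection U ∧ g ∈ U := by
  obtain ⟨e, hge, he⟩ := hEt g
  obtain ⟨f, hgf, hf⟩ := hEt (𝒢.inv g)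
  refine ⟨e.source ∩ 𝒢.inv ⁻¹' f.source, isBisection_of_injOn hEt
    (e.open_source.inter (f.open_source.preimage 𝒢.continuous_inv))
    (he ▸ e.injOn.mono inter_subset_left) ?_, hge, hgf⟩
  rw [𝒢.r_eq_d_comp_inv, hf]
  exact f.injOn.comp 𝒢.inv_involutive.injective.injOn fun _ h => h.2

theorem Ample.totallySeparatedSpace [T2Space G] (hA : 𝒢.Ample) : TotallySeparatedSpace G :=
  totallySeparatedSpace_of_t0_of_basis_clopen <|
    hA.of_isOpen_of_subset (fun _ hU => hU.isOpen) fun _ hU => ⟨hU.2.isClosed, hU.1.1⟩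

theorem ample_of_isTotallyDisconnected_units [T2Space G] [LocallyCompactSpace G]
    (hEt : 𝒢.Etale) (hTD : IsTotallyDisconnected 𝒢.units) : 𝒢.Ample := by
  refine isTopologicalBasis_of_isOpen_of_nhds (fun U hU => hU.1.1) fun g V hgV hV => ?_
  obtain ⟨U, hU, hgU⟩ := exists_isBisection_mem hEt g
  have hUV : 𝒢.IsBisection (U ∩ V) := hU.mono (hU.1.inter hV) inter_subset_left
  have hunits : 𝒢.d '' (U ∩ V) ⊆ 𝒢.units := image_subset_iff.2 fun a _ => 𝒢.d_mem_units a
  obtain ⟨K, hK, hKopen, hgK, hKUV⟩ := exists_isCompact_isOpen_subset_of_isTotallyDisconnected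
    (hEt.isOpenMap _ hUV.1) (fun t ht => hTD t (ht.trans hunits)) (mem_image_of_mem _ ⟨hgU, hgV⟩)
  exact ⟨U ∩ V ∩ 𝒢.d ⁻¹' K,
    ⟨hUV.mono (hUV.1.inter (hKopen.preimage hEt.continuous)) inter_subset_left,
      hUV.isCompact_inter_preimage_d hK hKUV⟩,
    ⟨⟨hgU, hgV⟩, hgK⟩, fun _ h => h.1.2⟩

end TopGroupoid

/-- An étale locally compact Hausdorff groupoid is ample (the compact
open bisections form a basis) if and only if its unit space is totally disconnected. -/
theorem ample_iff_totally_disconnected_units {G : Type u} [TopologicalSpace G]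
    [T2Space G] [LocallyCompactSpace G] (𝒢 : TopGroupoid G) (hEt : 𝒢.Etale) :
    𝒢.Ample ↔ IsTotallyDisconnected 𝒢.units := by
  refine ⟨fun hA => ?_, 𝒢.ample_of_isTotallyDisconnected_units hEt⟩
  have := hA.totallySeparatedSpace
  exact isTotallyDisconnected_of_totallyDisconnectedSpace _
end

section
/- Let q : 𝒜 → X be an upper-semicontinuous C*-bundle over a locally compact Hausdorff space X. If (a_λ) and (b_λ) are nets in 𝒜 with q(a_λ) = q(b_λ) for all λ and both nets converge to the same element a ∈ 𝒜, then lim_λ ‖a_λ − b_λ‖ = 0. -/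
open Topology Filter
open scoped ZeroAtInfty

universe u v

/-- The total space `⨿ₓ A x` of a bundle of (fibre) algebras over `X`,
as a plain sigma-type wrapper carrying no default topology. -/
structure TotalSpace {X : Type u} (A : X → Type v) where
  base : X
  fib : A base

/-- An upper-semicontinuous C*-bundle (of normed fibre algebras) over `X`: the
projection is continuous, the norm is upper semicontinuous, there are enough
continuous sections, and the sets `W(s, U, ε)` form a basis of the topology. -/
structure USCBundle (X : Type u) [TopologicalSpace X] (A : X → Type v)
    [∀ x, NonUnitalNormedRing (A x)] [∀ x, NormedSpace ℂ (A x)]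
    [TopologicalSpace (TotalSpace A)] : Prop where
  continuous_base : Continuous fun e : TotalSpace A => e.base
  usc_norm : ∀ c : ℝ, IsOpen {e : TotalSpace A | ‖e.fib‖ < c}
  exists_section : ∀ e : TotalSpace A, ∃ s : ∀ x, A x,
    Continuous (fun x => (⟨x, s x⟩ : TotalSpace A)) ∧ s e.base = e.fib
  isBasis : TopologicalSpace.IsTopologicalBasis
    {V : Set (TotalSpace A) | ∃ (s : ∀ x, A x) (U : Set X) (ε : ℝ),
      Continuous (fun x => (⟨x, s x⟩ : TotalSpace A)) ∧ IsOpen U ∧ 0 < ε ∧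
      V = {e | e.base ∈ U ∧ ‖e.fib - s e.base‖ < ε}}

/-- A continuous section of the bundle vanishing at infinity, i.e. an element of
`Γ₀(X, 𝒜)`. -/
def IsC0Section {X : Type u} [TopologicalSpace X] (A : X → Type v)
    [∀ x, NonUnitalNormedRing (A x)] [TopologicalSpace (TotalSpace A)]
    (s : ∀ x, A x) : Prop :=
  Continuous (fun x => (⟨x, s x⟩ : TotalSpace A)) ∧
    ∀ ε : ℝ, 0 < ε → ∃ L : Set X, IsCompact L ∧ ∀ x, ε ≤ ‖s x‖ → x ∈ L

private lemma cast_norm_eq {X : Type u} {A : X → Type v}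
    [∀ x, NonUnitalNormedRing (A x)] (s : ∀ x, A x)
    (e : TotalSpace A) (x : X) (h : e.base = x) :
    ‖cast (congrArg A h) e.fib - s x‖ = ‖e.fib - s e.base‖ := by
  subst h; rfl

/-- In an upper-semicontinuous C*-bundle, if two nets live over the
same base points and converge to the same element of the total space, then the
norms of their fibrewise differences tend to `0`. -/
theorem norm_sub_tendsto_zero_of_tendsto_same {X : Type u} [TopologicalSpace X]
    [T2Space X] [LocallyCompactSpace X] {A : X → Type v}
    [∀ x, NonUnitalNormedRing (A x)] [∀ x, NormedSpace ℂ (A x)]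
    [TopologicalSpace (TotalSpace A)] (hbdl : USCBundle X A)
    {ι : Type*} (l : Filter ι) (a : TotalSpace A) (aa bb : ι → TotalSpace A)
    (hbase : ∀ i, (aa i).base = (bb i).base)
    (ha : Tendsto aa l (𝓝 a)) (hb : Tendsto bb l (𝓝 a)) :
    Tendsto (fun i => ‖(aa i).fib - cast (congrArg A (hbase i).symm) ((bb i).fib)‖)
      l (𝓝 0) := by
  obtain ⟨s, hscont, hsa⟩ := hbdl.exists_section a
  rw [Metric.tendsto_nhds]
  intro ε hε
  have hopen : IsOpen {e : TotalSpace A | e.base ∈ (Set.univ : Set X) ∧ ‖e.fib - s e.base‖ < ε/2} :=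
    hbdl.isBasis.isOpen ⟨s, Set.univ, ε/2, hscont, isOpen_univ, by linarith, rfl⟩
  have haV : a ∈ {e : TotalSpace A | e.base ∈ (Set.univ : Set X) ∧ ‖e.fib - s e.base‖ < ε/2} := by
    refine ⟨trivial, ?_⟩
    rw [hsa]; simpa using by linarith
  have h1 := ha (hopen.mem_nhds haV)
  have h2 := hb (hopen.mem_nhds haV)
  filter_upwards [h1, h2] with i hi1 hi2
  have key : ‖(aa i).fib - cast (congrArg A (hbase i).symm) ((bb i).fib)‖ < ε := by
    have e1 : ‖(aa i).fib - s (aa i).base‖ < ε/2 := hi1.2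
    have e2 : ‖cast (congrArg A (hbase i).symm) ((bb i).fib) - s (aa i).base‖ < ε/2 := by
      rw [cast_norm_eq s (bb i) (aa i).base (hbase i).symm]
      exact hi2.2
    calc ‖(aa i).fib - cast (congrArg A (hbase i).symm) ((bb i).fib)‖
        = ‖((aa i).fib - s (aa i).base) - (cast (congrArg A (hbase i).symm) ((bb i).fib) - s (aa i).base)‖ := by
          rw [sub_sub_sub_cancel_right]
      _ ≤ ‖(aa i).fib - s (aa i).base‖ + ‖cast (congrArg A (hbase i).symm) ((bb i).fib) - s (aa i).base‖ :=
          norm_sub_le _ _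
      _ < ε := by linarith
  have hnn : (0:ℝ) ≤ ‖(aa i).fib - cast (congrArg A (hbase i).symm) ((bb i).fib)‖ := norm_nonneg _
  simpa [Real.dist_eq, abs_of_nonneg hnn] using key
end

section
/- Let G be a locally compact Hausdorff groupoid, X a G-compact G-space, and Y a proper G-space. Then every continuous G-equivariant map φ : X → Y is automatically a proper map. -/
open MeasureTheory Topology Filter
open scoped ENNReal

universe u v

/-- A continuous (left) action of a topological groupoid `𝒢` on a topological space
`X`: an anchor map `p : X → G⁽⁰⁾` and an action map `act`, continuous on the set of
composable pairs, compatible with multiplication and units. -/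
structure ActionCore {G : Type u} [TopologicalSpace G] (𝒢 : TopGroupoid G)
    (X : Type v) [TopologicalSpace X] where
  p : X → G
  p_mem : ∀ x, p x ∈ 𝒢.units
  continuous_p : Continuous p
  act : G → X → X
  continuous_act : Continuous fun q : {q : G × X // 𝒢.d q.1 = p q.2} => act q.val.1 q.val.2
  p_act : ∀ g x, 𝒢.d g = p x → p (act g x) = 𝒢.r g
  act_mul : ∀ g h x, 𝒢.Comp g h → 𝒢.d h = p x → act (𝒢.mul g h) x = act g (act h x)
  act_unit : ∀ x, act (p x) x = x

/-- Every continuous equivariant map from a `G`-compact `G`-space `X`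
to a proper `G`-space `Y` is a proper map. -/
theorem equivariant_map_to_proper_space_isProper {G : Type u} {X Y : Type v}
    [TopologicalSpace G] [T2Space G] [LocallyCompactSpace G]
    [TopologicalSpace X] [T2Space X] [LocallyCompactSpace X]
    [TopologicalSpace Y] [T2Space Y] [LocallyCompactSpace Y]
    (𝒢 : TopGroupoid G) (A : ActionCore 𝒢 X) (B : ActionCore 𝒢 Y)
    -- `X` is `G`-compact
    (hcc : ∃ K : Set X, IsCompact K ∧ ∀ x : X, ∃ g : G, ∃ k ∈ K,
      𝒢.d g = A.p k ∧ A.act g k = x)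
    -- `Y` is a proper `G`-space
    (hproper : ∀ K : Set Y, IsCompact K →
      IsCompact {g : G | ∃ y ∈ K, 𝒢.d g = B.p y ∧ B.act g y ∈ K})
    (φ : X → Y) (hφ : Continuous φ)
    (hanchor : ∀ x, B.p (φ x) = A.p x)
    (hequiv : ∀ g x, 𝒢.d g = A.p x → φ (A.act g x) = B.act g (φ x)) :
    ∀ C : Set Y, IsCompact C → IsCompact (φ ⁻¹' C) := by
  intro C hC
  obtain ⟨K, hK, hKcov⟩ := hcc
  have hLc : IsCompact (φ '' K ∪ C) := (hK.image hφ).union hC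
  set L : Set Y := φ '' K ∪ C with hLdef
  set S : Set G := {g : G | ∃ y ∈ L, 𝒢.d g = B.p y ∧ B.act g y ∈ L} with hSdef
  have hSc : IsCompact S := hproper L hLc
  -- d is continuous
  have hdcont : Continuous 𝒢.d := by
    have hmk : Continuous fun g : G => (⟨(𝒢.inv g, g), by
        rw [𝒢.comp_iff']; exact 𝒢.d_inv g⟩ : {p : G × G // 𝒢.Comp p.1 p.2}) :=
      Continuous.subtype_mk (𝒢.continuous_inv.prodMk continuous_id) _
    exact 𝒢.continuous_mul.comp hmk
  -- the compact set in the subtype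
  have hDclosed : IsClosed {q : G × X | 𝒢.d q.1 = A.p q.2} :=
    isClosed_eq (hdcont.comp continuous_fst) (A.continuous_p.comp continuous_snd)
  set Q := {q : G × X // 𝒢.d q.1 = A.p q.2} with hQdef
  set T : Set Q := Subtype.val ⁻¹' (S ×ˢ K) with hTdef
  have hTc : IsCompact T := by
    rw [Topology.IsEmbedding.isCompact_iff Topology.IsEmbedding.subtypeVal]
    have : Subtype.val '' T = (S ×ˢ K) ∩ {q : G × X | 𝒢.d q.1 = A.p q.2} := by
      ext q
      constructor
      · rintro ⟨⟨q', hq'⟩, hmem, rfl⟩; exact ⟨hmem, hq'⟩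
      · rintro ⟨hmem, hq⟩; exact ⟨⟨q, hq⟩, hmem, rfl⟩
    rw [this]
    exact ((hSc.prod hK).inter_right hDclosed)
  have hfc : Continuous fun q : Q => A.act q.val.1 q.val.2 := A.continuous_act
  have himg : IsCompact ((fun q : Q => A.act q.val.1 q.val.2) '' T) := hTc.image hfc
  apply himg.of_isClosed_subset (hC.isClosed.preimage hφ)
  intro x hx
  obtain ⟨g, k, hkK, hdg, hact⟩ := hKcov x
  have hgS : g ∈ S := by
    refine ⟨φ k, Or.inl ⟨k, hkK, rfl⟩, by rw [hanchor]; exact hdg, ?_⟩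
    rw [← hequiv g k hdg, hact]
    exact Or.inr hx
  exact ⟨⟨(g, k), hdg⟩, ⟨hgS, hkK⟩, hact⟩
end

section
/- Let G be a proper étale Hausdorff groupoid with Haar system of counting measures and compact orbit space G\G^(0), and let c : G^(0) → [0,1] be a compactly supported cutoff function. Then the function p_c : G → ℂ defined by p_c(g) = √(c(d(g)) c(r(g))) is a projection (p_c = p_c* = p_c ∗ p_c) in the convolution *-algebra C_c(G) ⊆ C_r*(G). -/
open MeasureTheory Topology Filter
open scoped ENNReal

universe u v

section Helpers

variable {G : Type u} [TopologicalSpace G] (𝒢 : TopGroupoid G)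

theorem TopGroupoid.comp_inv_self_s19 (g : G) : 𝒢.Comp (𝒢.inv g) g := by
  rw [𝒢.comp_iff, 𝒢.inv_inv]

theorem TopGroupoid.continuous_d : Continuous 𝒢.d := by
  have h1 : Continuous fun g : G =>
      (⟨(𝒢.inv g, g), 𝒢.comp_inv_self_s19 g⟩ : {p : G × G // 𝒢.Comp p.1 p.2}) :=
    Continuous.subtype_mk (𝒢.continuous_inv.prodMk continuous_id) _
  exact 𝒢.continuous_mul.comp h1

theorem TopGroupoid.continuous_r_s19 : Continuous 𝒢.r := by
  have : 𝒢.r = 𝒢.d ∘ 𝒢.inv := by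
    funext g; simp [TopGroupoid.d, TopGroupoid.r, 𝒢.inv_inv]
  rw [this]; exact 𝒢.continuous_d.comp 𝒢.continuous_inv

theorem TopGroupoid.d_d_s19 (g : G) : 𝒢.d (𝒢.d g) = 𝒢.d g :=
  𝒢.d_mul (𝒢.comp_inv_self_s19 g)

theorem TopGroupoid.r_d_s19 (g : G) : 𝒢.r (𝒢.d g) = 𝒢.d g := by
  have := 𝒢.r_mul (𝒢.comp_inv_self_s19 g)
  rw [𝒢.r_inv] at this
  exact this

theorem TopGroupoid.inv_d_s19 (g : G) : 𝒢.inv (𝒢.d g) = 𝒢.d g := by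
  set x := 𝒢.d g with hx
  have h := 𝒢.inv_mul_cancel_left x (𝒢.inv x) (𝒢.comp_inv x)
  have hr : 𝒢.mul x (𝒢.inv x) = x := 𝒢.r_d_s19 g
  rw [hr] at h
  have hd : 𝒢.mul (𝒢.inv x) x = x := 𝒢.d_d_s19 g
  rw [hd] at h
  exact h.symm

theorem TopGroupoid.d_mem_units_s19 (g : G) : 𝒢.d g ∈ 𝒢.units := by
  refine ⟨𝒢.inv_d_s19 g, ?_⟩
  have : 𝒢.mul (𝒢.d g) (𝒢.d g) = 𝒢.mul (𝒢.d g) (𝒢.inv (𝒢.d g)) := by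
    rw [𝒢.inv_d_s19]
  rw [this]; exact 𝒢.r_d_s19 g

theorem TopGroupoid.r_mem_units (g : G) : 𝒢.r g ∈ 𝒢.units := by
  rw [← 𝒢.d_inv]; exact 𝒢.d_mem_units_s19 _

theorem TopGroupoid.d_of_unit {u : G} (hu : u ∈ 𝒢.units) : 𝒢.d u = u := by
  show 𝒢.mul (𝒢.inv u) u = u
  rw [hu.1, hu.2]

end Helpers

/-- For a proper étale Hausdorff groupoid with compactly supported
cutoff function `c`, the function `p_c(g) = √(c(d g) c(r g))` is a self-adjoint
idempotent in the convolution *-algebra `C_c(G) ⊆ C_r*(G)`: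
it is continuous with compact support, `p_c* = p_c` (i.e. `conj (p_c(g⁻¹)) = p_c(g)`)
and `p_c ∗ p_c = p_c`. -/
theorem cutoff_projection {G : Type u} [TopologicalSpace G] [T2Space G]
    [LocallyCompactSpace G] (𝒢 : TopGroupoid G) (hEt : 𝒢.Etale)
    (hProper : ∀ K : Set G, K ⊆ 𝒢.units → IsCompact K →
      IsCompact (𝒢.d ⁻¹' K ∩ 𝒢.r ⁻¹' K))
    (c : G → ℝ) (hc : Continuous c) (hc0 : ∀ u, 0 ≤ c u) (hc1 : ∀ u, c u ≤ 1)
    (hsupp : HasCompactSupport c)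
    (hsum : ∀ u ∈ 𝒢.units, ∑ᶠ h ∈ {h : G | 𝒢.r h = u}, c (𝒢.d h) = 1) :
    (Continuous fun g : G => (Real.sqrt (c (𝒢.d g) * c (𝒢.r g)) : ℂ)) ∧
    HasCompactSupport (fun g : G => (Real.sqrt (c (𝒢.d g) * c (𝒢.r g)) : ℂ)) ∧
    (∀ g : G, starRingEnd ℂ
        ((Real.sqrt (c (𝒢.d (𝒢.inv g)) * c (𝒢.r (𝒢.inv g))) : ℂ)) =
      (Real.sqrt (c (𝒢.d g) * c (𝒢.r g)) : ℂ)) ∧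
    ∀ g : G, (∑ᶠ h ∈ {h : G | 𝒢.r h = 𝒢.r g},
        (Real.sqrt (c (𝒢.d h) * c (𝒢.r h)) : ℂ) *
          (Real.sqrt (c (𝒢.d (𝒢.mul (𝒢.inv h) g)) *
            c (𝒢.r (𝒢.mul (𝒢.inv h) g))) : ℂ)) =
      (Real.sqrt (c (𝒢.d g) * c (𝒢.r g)) : ℂ) := by
  classical
  have hd : Continuous 𝒢.d := 𝒢.continuous_d
  have hr : Continuous 𝒢.r := 𝒢.continuous_r_s19
  set p : G → ℂ := fun g => (Real.sqrt (c (𝒢.d g) * c (𝒢.r g)) : ℂ) with hp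
  have hcont : Continuous p := by
    exact Complex.continuous_ofReal.comp
      (Real.continuous_sqrt.comp ((hc.comp hd).mul (hc.comp hr)))
  refine ⟨hcont, ?_, ?_, ?_⟩
  · -- compact support
    set K : Set G := 𝒢.d '' tsupport c with hK
    have hKc : IsCompact K := hsupp.image hd
    have hKu : K ⊆ 𝒢.units := by
      rintro x ⟨y, -, rfl⟩; exact 𝒢.d_mem_units_s19 y
    have hC : IsCompact (𝒢.d ⁻¹' K ∩ 𝒢.r ⁻¹' K) := hProper K hKu hKc
    have hsub : Function.support p ⊆ 𝒢.d ⁻¹' K ∩ 𝒢.r ⁻¹' K := by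
      intro g hg
      have hne : c (𝒢.d g) * c (𝒢.r g) ≠ 0 := by
        intro h0
        apply hg
        simp [hp, h0]
      have h1 : c (𝒢.d g) ≠ 0 := fun h => hne (by rw [h, zero_mul])
      have h2 : c (𝒢.r g) ≠ 0 := fun h => hne (by rw [h, mul_zero])
      constructor
      · exact ⟨𝒢.d g, subset_tsupport c h1, 𝒢.d_d_s19 g⟩
      · refine ⟨𝒢.r g, subset_tsupport c h2, 𝒢.d_of_unit (𝒢.r_mem_units g)⟩
    rw [HasCompactSupport]
    exact hC.of_isClosed_subset isClosed_closure
      (closure_minimal hsub hC.isClosed)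
  · -- self-adjoint
    intro g
    rw [Complex.conj_ofReal, 𝒢.d_inv, 𝒢.r_inv, mul_comm]
  · -- idempotent
    intro g
    have hu : 𝒢.r g ∈ 𝒢.units := 𝒢.r_mem_units g
    set S : Set G := {h : G | 𝒢.r h = 𝒢.r g} with hS
    have hsum1 : (∑ᶠ h ∈ S, c (𝒢.d h)) = 1 := hsum (𝒢.r g) hu
    have hfin : (S ∩ Function.support fun h => c (𝒢.d h)).Finite := by
      by_contra hinf
      rw [finsum_mem_eq_zero_of_infinite hinf] at hsum1
      exact one_ne_zero hsum1.symm
    -- rewrite each term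
    have key : ∀ h ∈ S, (Real.sqrt (c (𝒢.d h) * c (𝒢.r h)) : ℂ) *
        (Real.sqrt (c (𝒢.d (𝒢.mul (𝒢.inv h) g)) * c (𝒢.r (𝒢.mul (𝒢.inv h) g))) : ℂ)
        = (c (𝒢.d h) : ℂ) * (Real.sqrt (c (𝒢.d g) * c (𝒢.r g)) : ℂ) := by
      intro h hh
      have hcomp : 𝒢.Comp (𝒢.inv h) g := 𝒢.comp_inv_left hh
      have e1 : 𝒢.d (𝒢.mul (𝒢.inv h) g) = 𝒢.d g := 𝒢.d_mul hcomp
      have e2 : 𝒢.r (𝒢.mul (𝒢.inv h) g) = 𝒢.d h := by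
        rw [𝒢.r_mul hcomp, 𝒢.r_inv]
      have hh' : 𝒢.r h = 𝒢.r g := hh
      rw [e1, e2, hh']
      have : Real.sqrt (c (𝒢.d h) * c (𝒢.r g)) * Real.sqrt (c (𝒢.d g) * c (𝒢.d h))
          = c (𝒢.d h) * Real.sqrt (c (𝒢.d g) * c (𝒢.r g)) := by
        have hs : Real.sqrt (c (𝒢.d h)) * Real.sqrt (c (𝒢.d h)) = c (𝒢.d h) :=
          Real.mul_self_sqrt (hc0 _)
        calc Real.sqrt (c (𝒢.d h) * c (𝒢.r g)) * Real.sqrt (c (𝒢.d g) * c (𝒢.d h))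
            = (Real.sqrt (c (𝒢.d h)) * Real.sqrt (c (𝒢.r g))) *
              (Real.sqrt (c (𝒢.d g)) * Real.sqrt (c (𝒢.d h))) := by
              rw [Real.sqrt_mul (hc0 _), Real.sqrt_mul (hc0 _)]
          _ = (Real.sqrt (c (𝒢.d h)) * Real.sqrt (c (𝒢.d h))) *
              (Real.sqrt (c (𝒢.d g)) * Real.sqrt (c (𝒢.r g))) := by ring
          _ = c (𝒢.d h) * (Real.sqrt (c (𝒢.d g)) * Real.sqrt (c (𝒢.r g))) := by rw [hs]
          _ = c (𝒢.d h) * Real.sqrt (c (𝒢.d g) * c (𝒢.r g)) := by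
              rw [← Real.sqrt_mul (hc0 _)]
      exact_mod_cast congrArg Complex.ofReal this
    rw [finsum_mem_congr rfl key]
    -- pull out the constant
    by_cases hKz : (Real.sqrt (c (𝒢.d g) * c (𝒢.r g)) : ℂ) = 0
    · rw [hKz]
      simp
    · have hsupp_eq : (S ∩ Function.support fun h =>
          (c (𝒢.d h) : ℂ) * (Real.sqrt (c (𝒢.d g) * c (𝒢.r g)) : ℂ)) =
          (S ∩ Function.support fun h => c (𝒢.d h)) := by
        ext h
        simp only [Set.mem_inter_iff, Function.mem_support]
        constructor
        · rintro ⟨h1, h2⟩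
          refine ⟨h1, fun h0 => h2 (by rw [h0]; simp)⟩
        · rintro ⟨h1, h2⟩
          refine ⟨h1, fun h0 => h2 ?_⟩
          have := mul_eq_zero.mp h0
          rcases this with h3 | h3
          · exact_mod_cast h3
          · exact absurd h3 hKz
      have hfin' : (S ∩ Function.support fun h =>
          (c (𝒢.d h) : ℂ) * (Real.sqrt (c (𝒢.d g) * c (𝒢.r g)) : ℂ)).Finite := by
        rw [hsupp_eq]; exact hfin
      rw [finsum_mem_eq_sum _ hfin']
      rw [finsum_mem_eq_sum _ hfin] at hsum1
      have htof : hfin'.toFinset = hfin.toFinset := by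
        simp only [Set.Finite.toFinset_inj]
        exact hsupp_eq
      rw [htof, ← Finset.sum_mul]
      have : (∑ h ∈ hfin.toFinset, (c (𝒢.d h) : ℂ)) = 1 := by
        rw [← Complex.ofReal_sum, hsum1, Complex.ofReal_one]
      rw [this, one_mul]
end
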